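/- (Landauer bound, measure-theoretic core.) Let (X, μ) be a σ-finite measure space and, for j = 1, …, m, let (Y_j, ν_j) be heat reservoirs with measurable Hamiltonians H_j, inverse temperatures β_j > 0, finite nonzero partition functions, and canonical densities g_j = Z_j⁻¹ e^{-β_j H_j}. Let Φ be a fixed measure-preserving measurable equivalence of the product space X × Y_1 × ⋯ × Y_m. Let f_1, …, f_n be probability densities on X such that for each i, the evolution of the initial joint product density f_i ⊗ g_1 ⊗ ⋯ ⊗ g_m under Φ yields a final joint density whose X-marginal is one and the same density f_b; let Q_{i,j} = ∫ H_j g_j dν_j - ∫ H_j g_j^{(i)'} dν_j be the expected heat gained from reservoir j when the initial system density is f_i (g_j^{(i)'} being the corresponding final Y_j-marginal). Let p_1, …, p_n be positive reals summing to 1 and f̄ = ∑_i p_i f_i. Then, assuming all the relevant entropy, relative-entropy, and energy integrals are finite, ∑_{i=1}^n p_i ∑_{j=1}^m β_j Q_{i,j} ≤ ∑_{i=1}^n p_i (S[f_b] - S[f_i]) - ∑_{i=1}^n p_i S[f_i ‖ f̄]. -/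

import Mathlib

/-!
Average the inputs. The mixture `h = ∑ pᵢ f₁ᵢ` of the final joint densities is the image under `Φ`
of the product density `f̄ ⊗ g₁ ⊗ ⋯ ⊗ gₘ`, and its marginals are `f_b` and `∑ pᵢ g'ᵢⱼ`. As `Φ`
preserves the measure, `∫ h log h = ∫ f̄ log f̄ + ∑ⱼ ∫ gⱼ log gⱼ`. Gibbs' inequality against the
density `q = f_b ⊗ g₁ ⊗ ⋯ ⊗ gₘ` of the same mass gives `∫ h log q ≤ ∫ h log h`, and `∫ h log q`
only sees the marginals of `h`: it is `∫ f_b log f_b + ∑ⱼ ∫ (∑ pᵢ g'ᵢⱼ) log gⱼ`. Since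
`log gⱼ = -log Zⱼ - βⱼ Hⱼ`, the reservoir terms are energies, which yields the Clausius inequality
`∑ⱼ βⱼ Qⱼ ≤ S[f_b] - S[f̄]` for the averaged heats; finally
`S[f̄] = ∑ pᵢ S[fᵢ] + ∑ pᵢ S[fᵢ ‖ f̄]`.
-/

open MeasureTheory Real

theorem sub_le_mul_log_sub_mul_log {a b : ℝ} (ha : 0 ≤ a) (hb : 0 ≤ b) (hab : b = 0 → a = 0) :
    a - b ≤ a * log a - a * log b := by
  rcases ha.eq_or_lt with rfl | ha
  · simpa using hb
  have hb : 0 < b := hb.lt_of_ne fun h => ha.ne' (hab h.symm)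
  have hlog := log_le_sub_one_of_pos (div_pos hb ha)
  rw [log_div hb.ne' ha.ne'] at hlog
  have := mul_le_mul_of_nonneg_left hlog ha.le
  rw [mul_sub, mul_sub, mul_div_cancel₀ _ ha.ne'] at this
  linarith

theorem integral_mul_log_le_integral_mul_log {Ω : Type*} [MeasurableSpace Ω] {μ : Measure Ω}
    {h q : Ω → ℝ} (hh0 : ∀ w, 0 ≤ h w) (hq0 : ∀ w, 0 ≤ q w) (hhq : ∀ᵐ w ∂μ, q w = 0 → h w = 0)
    (hh : Integrable h μ) (hq : Integrable q μ)
    (hhh : Integrable (fun w => h w * log (h w)) μ) (hhq' : Integrable (fun w => h w * log (q w)) μ)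
    (heq : ∫ w, h w ∂μ = ∫ w, q w ∂μ) :
    ∫ w, h w * log (q w) ∂μ ≤ ∫ w, h w * log (h w) ∂μ := by
  have := integral_mono_ae (hh.sub hq) (hhh.sub hhq') <| hhq.mono fun w hw =>
    sub_le_mul_log_sub_mul_log (hh0 w) (hq0 w) hw
  rw [integral_sub' hh hq, integral_sub' hhh hhq', heq, sub_self, sub_nonneg] at this
  exact this

section Marginal

variable {Ω α : Type*} [MeasurableSpace Ω] [MeasurableSpace α]

theorem integral_withDensity_ofReal {μ : Measure Ω} {h : Ω → ℝ} (hh : Measurable h)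
    (hh0 : ∀ w, 0 ≤ h w) (φ : Ω → ℝ) :
    ∫ w, φ w ∂μ.withDensity (fun w => ENNReal.ofReal (h w)) = ∫ w, h w * φ w ∂μ := by
  simp only [integral_withDensity_eq_integral_toReal_smul hh.ennreal_ofReal
    (ae_of_all _ fun _ => ENNReal.ofReal_lt_top), ENNReal.toReal_ofReal (hh0 _), smul_eq_mul]

theorem integrable_withDensity_ofReal_iff {μ : Measure Ω} {h : Ω → ℝ} (hh : Measurable h)
    (hh0 : ∀ w, 0 ≤ h w) {φ : Ω → ℝ} :
    Integrable φ (μ.withDensity fun w => ENNReal.ofReal (h w)) ↔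
      Integrable (fun w => h w * φ w) μ := by
  simp only [integrable_withDensity_iff_integrable_smul' hh.ennreal_ofReal
    (ae_of_all _ fun _ => ENNReal.ofReal_lt_top), ENNReal.toReal_ofReal (hh0 _), smul_eq_mul]

theorem integral_indicator_one_comp_mul {μ : Measure Ω} {T : Ω → α} (hT : Measurable T)
    {s : Set α} (hs : MeasurableSet s) (h : Ω → ℝ) :
    ∫ w, s.indicator (fun _ => (1 : ℝ)) (T w) * h w ∂μ = ∫ w in T ⁻¹' s, h w ∂μ := by
  rw [← integral_indicator (hT hs)]
  congr with w
  by_cases hw : T w ∈ s <;> simp [hw]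

structure HasMarginalDensity (μ : Measure Ω) (h : Ω → ℝ) (T : Ω → α) (κ : Measure α)
    (ρ : α → ℝ) : Prop where
  measurable_map : Measurable T
  measurable : Measurable ρ
  nonneg : ∀ x, 0 ≤ ρ x
  map_withDensity_eq :
    (μ.withDensity fun w => ENNReal.ofReal (h w)).map T =
      κ.withDensity fun x => ENNReal.ofReal (ρ x)

namespace HasMarginalDensity

variable {μ : Measure Ω} {κ : Measure α} {h : Ω → ℝ} {T : Ω → α} {ρ : α → ℝ}

theorem integral_mul_comp (hρ : HasMarginalDensity μ h T κ ρ) (hh : Measurable h)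
    (hh0 : ∀ w, 0 ≤ h w) {φ : α → ℝ} (hφ : Measurable φ) :
    ∫ w, h w * φ (T w) ∂μ = ∫ x, ρ x * φ x ∂κ := by
  rw [← integral_withDensity_ofReal hρ.measurable hρ.nonneg, ← hρ.map_withDensity_eq,
    integral_map hρ.measurable_map.aemeasurable hφ.aestronglyMeasurable,
    integral_withDensity_ofReal hh hh0]

theorem integrable_mul_comp (hρ : HasMarginalDensity μ h T κ ρ) (hh : Measurable h)
    (hh0 : ∀ w, 0 ≤ h w) {φ : α → ℝ} (hφ : Measurable φ)
    (hρφ : Integrable (fun x => ρ x * φ x) κ) : Integrable (fun w => h w * φ (T w)) μ := by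
  rw [← integrable_withDensity_ofReal_iff hρ.measurable hρ.nonneg, ← hρ.map_withDensity_eq,
    integrable_map_measure hφ.aestronglyMeasurable hρ.measurable_map.aemeasurable,
    integrable_withDensity_ofReal_iff hh hh0] at hρφ
  exact hρφ

theorem integrable (hρ : HasMarginalDensity μ h T κ ρ) (hh : Integrable h μ) : Integrable ρ κ := by
  have : IsFiniteMeasure (μ.withDensity fun w => ENNReal.ofReal (h w)) :=
    isFiniteMeasure_withDensity_ofReal hh.2
  have h1 : Integrable (fun _ => (1 : ℝ)) (κ.withDensity fun x => ENNReal.ofReal (ρ x)) := by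
    rw [← hρ.map_withDensity_eq]
    exact integrable_const 1
  simpa using (integrable_withDensity_ofReal_iff hρ.measurable hρ.nonneg).1 h1

theorem integral_eq (hρ : HasMarginalDensity μ h T κ ρ) (hh : Measurable h)
    (hh0 : ∀ w, 0 ≤ h w) : ∫ x, ρ x ∂κ = ∫ w, h w ∂μ := by
  simpa using (hρ.integral_mul_comp hh hh0 measurable_const (φ := fun _ => (1 : ℝ))).symm

theorem ae_eq_zero_of_eq_zero (hρ : HasMarginalDensity μ h T κ ρ) (hh : Measurable h)
    (hh0 : ∀ w, 0 ≤ h w) : ∀ᵐ w ∂μ, ρ (T w) = 0 → h w = 0 := by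
  have hZ : MeasurableSet {x | ρ x = 0} := hρ.measurable (measurableSet_singleton 0)
  have hκ : (κ.withDensity fun x => ENNReal.ofReal (ρ x)) {x | ρ x = 0} = 0 := by
    rw [withDensity_apply _ hZ]
    exact setLIntegral_eq_zero hZ fun x (hx : ρ x = 0) => by simp [hx]
  rw [← hρ.map_withDensity_eq, Measure.map_apply hρ.measurable_map hZ,
    withDensity_apply_eq_zero' hh.ennreal_ofReal.aemeasurable, measure_eq_zero_iff_ae_notMem] at hκ
  filter_upwards [hκ] with w hw hTw
  simpa [hTw, (hh0 w).ge_iff_eq'] using hw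

theorem of_setIntegral_eq [SigmaFinite κ] (hh : Integrable h μ) (hh0 : ∀ w, 0 ≤ h w)
    (hT : Measurable T) (hρm : Measurable ρ) (hρ0 : ∀ x, 0 ≤ ρ x)
    (H : ∀ s, MeasurableSet s → ∫ x in s, ρ x ∂κ = ∫ w in T ⁻¹' s, h w ∂μ) :
    HasMarginalDensity μ h T κ ρ := by
  refine ⟨hT, hρm, hρ0, ?_⟩
  -- compare the two measures on the spanning sets of `ρ • κ`, where `ρ` is integrable
  set κρ := κ.withDensity fun x => ENNReal.ofReal (ρ x)
  refine (Measure.ext_iff_of_iUnion_eq_univ (iUnion_spanningSets κρ)).2 fun n => ?_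
  ext s hs
  have ht := hs.inter (measurableSet_spanningSets κρ n)
  have hρt : IntegrableOn ρ (s ∩ spanningSets κρ n) κ := by
    refine ⟨hρm.aestronglyMeasurable, (hasFiniteIntegral_iff_ofReal (ae_of_all _ hρ0)).2 ?_⟩
    rw [← withDensity_apply _ ht]
    exact (measure_mono Set.inter_subset_right).trans_lt (measure_spanningSets_lt_top κρ n)
  rw [Measure.restrict_apply hs, Measure.restrict_apply hs, Measure.map_apply hT ht,
    withDensity_apply _ (hT ht), withDensity_apply _ ht,
    ← ofReal_integral_eq_lintegral_ofReal hh.integrableOn (ae_of_all _ hh0),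
    ← ofReal_integral_eq_lintegral_ofReal hρt (ae_of_all _ hρ0), H _ ht]

theorem of_integral_indicator_mul_eq [SigmaFinite κ] (hh : Integrable h μ) (hh0 : ∀ w, 0 ≤ h w)
    (hT : Measurable T) (hρm : Measurable ρ) (hρ0 : ∀ x, 0 ≤ ρ x)
    (H : ∀ s, MeasurableSet s →
      ∫ x in s, ρ x ∂κ = ∫ w, s.indicator (fun _ => (1 : ℝ)) (T w) * h w ∂μ) :
    HasMarginalDensity μ h T κ ρ :=
  of_setIntegral_eq hh hh0 hT hρm hρ0 fun s hs => by
    rw [H s hs, integral_indicator_one_comp_mul hT hs]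

theorem setIntegral_eq (hρ : HasMarginalDensity μ h T κ ρ) (hh : Measurable h)
    (hh0 : ∀ w, 0 ≤ h w) {s : Set α} (hs : MeasurableSet s) :
    ∫ x in s, ρ x ∂κ = ∫ w in T ⁻¹' s, h w ∂μ := by
  have := hρ.integral_mul_comp hh hh0 (measurable_const.indicator hs (f := fun _ => (1 : ℝ)))
  simp_rw [mul_comm (h _), mul_comm (ρ _)] at this
  rw [integral_indicator_one_comp_mul hρ.measurable_map hs] at this
  rw [this]
  exact (integral_indicator_one_comp_mul measurable_id hs ρ).symm

theorem finset_sum [SigmaFinite κ] {ι : Type*} [Fintype ι] {c : ι → ℝ} (hc : ∀ i, 0 ≤ c i)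
    {h : ι → Ω → ℝ} {ρ : ι → α → ℝ} (hρ : ∀ i, HasMarginalDensity μ (h i) T κ (ρ i))
    (hh : ∀ i, Integrable (h i) μ) (hhm : ∀ i, Measurable (h i)) (hh0 : ∀ i w, 0 ≤ h i w)
    (hT : Measurable T) :
    HasMarginalDensity μ (fun w => ∑ i, c i * h i w) T κ (fun x => ∑ i, c i * ρ i x) := by
  refine of_setIntegral_eq (integrable_finsetSum _ fun i _ => (hh i).const_mul (c i))
    (fun w => Finset.sum_nonneg fun i _ => mul_nonneg (hc i) (hh0 i w)) hT
    (Finset.measurable_sum _ fun i _ => (hρ i).measurable.const_mul (c i))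
    (fun x => Finset.sum_nonneg fun i _ => mul_nonneg (hc i) ((hρ i).nonneg x)) fun s hs => ?_
  rw [integral_finsetSum _ fun i _ => (((hρ i).integrable (hh i)).const_mul (c i)).integrableOn,
    integral_finsetSum _ fun i _ => ((hh i).const_mul (c i)).integrableOn]
  refine Finset.sum_congr rfl fun i _ => ?_
  rw [integral_const_mul, integral_const_mul, (hρ i).setIntegral_eq (hhm i) (hh0 i) hs]

end HasMarginalDensity

theorem withDensity_ofReal_mul_prod {β : Type*} [MeasurableSpace β] {μ : Measure Ω} {ν : Measure β}
    [SFinite ν] {a : Ω → ℝ} {c : β → ℝ} (ha : Measurable a) (ha0 : ∀ x, 0 ≤ a x)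
    (hc : Measurable c) :
    (μ.prod ν).withDensity (fun w => ENNReal.ofReal (a w.1 * c w.2)) =
      (μ.withDensity fun x => ENNReal.ofReal (a x)).prod
        (ν.withDensity fun y => ENNReal.ofReal (c y)) := by
  rw [prod_withDensity ha.ennreal_ofReal hc.ennreal_ofReal]
  congr with w
  exact ENNReal.ofReal_mul (ha0 _)

theorem withDensity_ofReal_apply_univ {μ : Measure Ω} {h : Ω → ℝ} (hh : Integrable h μ)
    (hh0 : ∀ w, 0 ≤ h w) :
    (μ.withDensity fun w => ENNReal.ofReal (h w)) Set.univ = ENNReal.ofReal (∫ w, h w ∂μ) := by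
  rw [withDensity_apply _ MeasurableSet.univ, Measure.restrict_univ,
    ofReal_integral_eq_lintegral_ofReal hh (ae_of_all _ hh0)]

theorem hasMarginalDensity_fst_prod {β : Type*} [MeasurableSpace β] {μ : Measure Ω}
    {ν : Measure β} [SFinite ν] {a : Ω → ℝ} {c : β → ℝ} (ha : Measurable a) (ha0 : ∀ x, 0 ≤ a x)
    (hc : Measurable c) (hc0 : ∀ y, 0 ≤ c y) (hci : Integrable c ν) (hc1 : ∫ y, c y ∂ν = 1) :
    HasMarginalDensity (μ.prod ν) (fun w => a w.1 * c w.2) Prod.fst μ a := by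
  refine ⟨measurable_fst, ha, ha0, ?_⟩
  rw [withDensity_ofReal_mul_prod ha ha0 hc, Measure.map_fst_prod,
    withDensity_ofReal_apply_univ hci hc0, hc1, ENNReal.ofReal_one, one_smul]

theorem HasMarginalDensity.prod_snd {β γ : Type*} [MeasurableSpace β] [MeasurableSpace γ]
    {μ : Measure Ω} {ν : Measure β} [SFinite ν] {ξ : Measure γ} {a : Ω → ℝ} {c : β → ℝ}
    {S : β → γ} {b : γ → ℝ} (hb : HasMarginalDensity ν c S ξ b) (ha : Measurable a)
    (ha0 : ∀ x, 0 ≤ a x) (hai : Integrable a μ) (ha1 : ∫ x, a x ∂μ = 1) (hc : Measurable c) :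
    HasMarginalDensity (μ.prod ν) (fun w => a w.1 * c w.2) (fun w => S w.2) ξ b := by
  refine ⟨hb.measurable_map.comp measurable_snd, hb.measurable, hb.nonneg, ?_⟩
  rw [withDensity_ofReal_mul_prod ha ha0 hc, show (fun w : Ω × β => S w.2) = S ∘ Prod.snd from rfl,
    ← Measure.map_map hb.measurable_map measurable_snd,
    Measure.map_snd_prod, withDensity_ofReal_apply_univ hai ha0, ha1, ENNReal.ofReal_one, one_smul,
    hb.map_withDensity_eq]

end Marginal

section Pi

variable {ι : Type*} [Fintype ι] {Y : ι → Type*} [∀ j, MeasurableSpace (Y j)]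
  {ν : ∀ j, Measure (Y j)} [∀ j, SigmaFinite (ν j)] {g : ∀ j, Y j → ℝ}

theorem integral_comp_eval_mul_prod {j : ι} (hg : ∀ k ≠ j, ∫ y, g k y ∂ν k = 1) (φ : Y j → ℝ) :
    ∫ y, φ (y j) * ∏ k, g k (y k) ∂Measure.pi ν = ∫ y, φ y * g j y ∂ν j := by
  classical
  set F := Function.update g j fun y => φ y * g j y
  have hF : ∀ y : ∀ k, Y k, ∏ k, F k (y k) = φ (y j) * ∏ k, g k (y k) := by
    intro y
    rw [← Finset.mul_prod_erase _ _ (Finset.mem_univ j),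
      ← Finset.mul_prod_erase _ (fun k => g k (y k)) (Finset.mem_univ j),
      Finset.prod_congr rfl fun k hk =>
        congrFun (Function.update_of_ne (Finset.ne_of_mem_erase hk) _ g) (y k)]
    simp only [F, Function.update_self]
    ring
  simp_rw [← hF]
  rw [integral_fintype_prod_eq_prod, Finset.prod_eq_single j
    (fun k _ hk => by simp only [F, Function.update_of_ne hk, hg k hk]) (by simp)]
  simp [F]

theorem hasMarginalDensity_pi_eval (hg : ∀ k, Measurable (g k)) (hg0 : ∀ k y, 0 ≤ g k y)
    (hgi : ∀ k, Integrable (g k) (ν k)) (hg1 : ∀ k, ∫ y, g k y ∂ν k = 1) (j : ι) :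
    HasMarginalDensity (Measure.pi ν) (fun y => ∏ k, g k (y k)) (fun y => y j) (ν j) (g j) := by
  refine .of_setIntegral_eq (Integrable.fintype_prod_dep hgi)
    (fun y => Finset.prod_nonneg fun k _ => hg0 k _) (measurable_pi_apply j) (hg j) (hg0 j)
    fun s hs => ?_
  rw [← integral_indicator_one_comp_mul (measurable_pi_apply j) hs,
    integral_comp_eval_mul_prod (fun k _ => hg1 k)]
  exact (integral_indicator_one_comp_mul measurable_id hs (g j)).symm

end Pi

section CrossEntropy

variable {Ω X ι : Type*} [MeasurableSpace Ω] [MeasurableSpace X] [Fintype ι] {Y : ι → Type*}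
  {μ : Measure Ω} {μX : Measure X} {k : Ω → ℝ} {T₀ : Ω → X} {T : ∀ j, Ω → Y j} {a : X → ℝ}
  {c : ∀ j, Y j → ℝ}

theorem ae_mul_log_mul_prod_eq (hk : Measurable k) (hk0 : ∀ w, 0 ≤ k w)
    (ha : HasMarginalDensity μ k T₀ μX a) (hc0 : ∀ j y, c j y ≠ 0) :
    (fun w => k w * log (a (T₀ w) * ∏ j, c j (T j w))) =ᵐ[μ]
      fun w => k w * log (a (T₀ w)) + ∑ j, k w * log (c j (T j w)) := by
  filter_upwards [ha.ae_eq_zero_of_eq_zero hk hk0] with w hw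
  by_cases ha0 : a (T₀ w) = 0
  · simp [hw ha0]
  rw [log_mul ha0 (Finset.prod_ne_zero_iff.2 fun j _ => hc0 j _),
    log_prod fun j _ => hc0 j _, mul_add, Finset.mul_sum]

theorem integrable_mul_log_mul_prod [∀ j, MeasurableSpace (Y j)] {ν : ∀ j, Measure (Y j)}
    {b : ∀ j, Y j → ℝ} (hk : Measurable k) (hk0 : ∀ w, 0 ≤ k w)
    (ha : HasMarginalDensity μ k T₀ μX a) (hb : ∀ j, HasMarginalDensity μ k (T j) (ν j) (b j))
    (hc : ∀ j, Measurable (c j)) (hc0 : ∀ j y, c j y ≠ 0)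
    (hal : Integrable (fun x => a x * log (a x)) μX)
    (hbc : ∀ j, Integrable (fun y => b j y * log (c j y)) (ν j)) :
    Integrable (fun w => k w * log (a (T₀ w) * ∏ j, c j (T j w))) μ :=
  ((ha.integrable_mul_comp hk hk0 ha.measurable.log hal).add
    (integrable_finsetSum _ fun j _ =>
      (hb j).integrable_mul_comp hk hk0 (hc j).log (hbc j))).congr
    (ae_mul_log_mul_prod_eq hk hk0 ha hc0).symm

theorem integral_mul_log_mul_prod [∀ j, MeasurableSpace (Y j)] {ν : ∀ j, Measure (Y j)}
    {b : ∀ j, Y j → ℝ} (hk : Measurable k) (hk0 : ∀ w, 0 ≤ k w)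
    (ha : HasMarginalDensity μ k T₀ μX a) (hb : ∀ j, HasMarginalDensity μ k (T j) (ν j) (b j))
    (hc : ∀ j, Measurable (c j)) (hc0 : ∀ j y, c j y ≠ 0)
    (hal : Integrable (fun x => a x * log (a x)) μX)
    (hbc : ∀ j, Integrable (fun y => b j y * log (c j y)) (ν j)) :
    ∫ w, k w * log (a (T₀ w) * ∏ j, c j (T j w)) ∂μ =
      ∫ x, a x * log (a x) ∂μX + ∑ j, ∫ y, b j y * log (c j y) ∂ν j := by
  rw [integral_congr_ae (ae_mul_log_mul_prod_eq hk hk0 ha hc0),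
    integral_add (ha.integrable_mul_comp hk hk0 ha.measurable.log hal)
      (integrable_finsetSum _ fun j _ => (hb j).integrable_mul_comp hk hk0 (hc j).log (hbc j)),
    integral_finsetSum _ fun j _ => (hb j).integrable_mul_comp hk hk0 (hc j).log (hbc j),
    ha.integral_mul_comp hk hk0 ha.measurable.log]
  congr 1
  exact Finset.sum_congr rfl fun j _ => (hb j).integral_mul_comp hk hk0 (hc j).log

end CrossEntropy

section Reservoir

variable {Y : Type*} {β Z : ℝ} {H : Y → ℝ}

noncomputable def canonicalDensity (β : ℝ) (H : Y → ℝ) (Z : ℝ) (y : Y) : ℝ :=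
  Z⁻¹ * exp (-β * H y)

theorem measurable_canonicalDensity [MeasurableSpace Y] (hH : Measurable H) :
    Measurable (canonicalDensity β H Z) := by
  unfold canonicalDensity
  fun_prop

theorem canonicalDensity_pos (hZ : 0 < Z) (y : Y) : 0 < canonicalDensity β H Z y :=
  mul_pos (inv_pos.2 hZ) (exp_pos _)

theorem integrable_canonicalDensity [MeasurableSpace Y] {ν : Measure Y}
    (hexp : Integrable (fun y => exp (-β * H y)) ν) :
    Integrable (canonicalDensity β H Z) ν :=
  hexp.const_mul _

theorem integral_canonicalDensity [MeasurableSpace Y] {ν : Measure Y}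
    (hZ : Z = ∫ y, exp (-β * H y) ∂ν) (hZpos : 0 < Z) :
    ∫ y, canonicalDensity β H Z y ∂ν = 1 := by
  simp only [canonicalDensity]
  rw [integral_const_mul, ← hZ, inv_mul_cancel₀ hZpos.ne']

theorem mul_log_canonicalDensity (hZ : 0 < Z) (b : ℝ) (y : Y) :
    b * log (canonicalDensity β H Z y) = -log Z * b - β * (H y * b) := by
  rw [canonicalDensity, log_mul (inv_pos.2 hZ).ne' (exp_pos _).ne', log_inv, log_exp]
  ring

theorem integrable_mul_log_canonicalDensity [MeasurableSpace Y] {ν : Measure Y}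
    (hZ : 0 < Z) {b : Y → ℝ} (hb : Integrable b ν)
    (hHb : Integrable (fun y => H y * b y) ν) :
    Integrable (fun y => b y * log (canonicalDensity β H Z y)) ν := by
  simp only [mul_log_canonicalDensity hZ]
  exact (hb.const_mul _).sub (hHb.const_mul _)

theorem integral_mul_log_canonicalDensity [MeasurableSpace Y] {ν : Measure Y}
    (hZ : 0 < Z) {b : Y → ℝ} (hb : Integrable b ν)
    (hHb : Integrable (fun y => H y * b y) ν) :
    ∫ y, b y * log (canonicalDensity β H Z y) ∂ν =
      -log Z * ∫ y, b y ∂ν - β * ∫ y, H y * b y ∂ν := by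
  simp only [mul_log_canonicalDensity hZ]
  rw [integral_sub (hb.const_mul _) (hHb.const_mul _), integral_const_mul, integral_const_mul]

end Reservoir

section Evolution

variable {X ι : Type*} [MeasurableSpace X] [Fintype ι] {Y : ι → Type*} [∀ j, MeasurableSpace (Y j)]
  {μ : Measure X} {ν : ∀ j, Measure (Y j)} [∀ j, SigmaFinite (ν j)]
  {Φ : (X × (∀ j, Y j)) ≃ᵐ (X × (∀ j, Y j))} {a : X → ℝ} {g : ∀ j, Y j → ℝ}

/-- For measure-preserving `Φ`, the density of the image under `Φ` of the product density
`a ⊗ g 1 ⊗ ⋯ ⊗ g m`. -/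
noncomputable def evolvedDensity (Φ : (X × (∀ j, Y j)) ≃ᵐ (X × (∀ j, Y j))) (a : X → ℝ)
    (g : ∀ j, Y j → ℝ) (w : X × (∀ j, Y j)) : ℝ :=
  a (Φ.symm w).1 * ∏ j, g j ((Φ.symm w).2 j)

theorem measurable_evolvedDensity (ha : Measurable a) (hg : ∀ j, Measurable (g j)) :
    Measurable (evolvedDensity Φ a g) := by
  unfold evolvedDensity
  fun_prop

theorem evolvedDensity_nonneg (ha0 : ∀ x, 0 ≤ a x) (hg0 : ∀ j y, 0 ≤ g j y)
    (w : X × (∀ j, Y j)) :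
    0 ≤ evolvedDensity Φ a g w :=
  mul_nonneg (ha0 _) (Finset.prod_nonneg fun j _ => hg0 j _)

theorem integrable_evolvedDensity
    (hΦ : MeasurePreserving Φ (μ.prod (Measure.pi ν)) (μ.prod (Measure.pi ν)))
    (hai : Integrable a μ) (hgi : ∀ j, Integrable (g j) (ν j)) :
    Integrable (evolvedDensity Φ a g) (μ.prod (Measure.pi ν)) :=
  ((hΦ.symm Φ).integrable_comp_emb Φ.symm.measurableEmbedding).2
    (hai.mul_prod (Integrable.fintype_prod_dep hgi))

theorem evolvedDensity_finset_sum {κ : Type*} (s : Finset κ) (c : κ → ℝ) (f : κ → X → ℝ)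
    (w : X × (∀ j, Y j)) :
    evolvedDensity Φ (fun x => ∑ i ∈ s, c i * f i x) g w =
      ∑ i ∈ s, c i * evolvedDensity Φ (f i) g w := by
  simp only [evolvedDensity, Finset.sum_mul, mul_assoc]

theorem hasMarginalDensity_evolvedDensity_finset_sum {κ α : Type*} [Fintype κ] [MeasurableSpace α]
    {ξ : Measure α} [SigmaFinite ξ]
    (hΦ : MeasurePreserving Φ (μ.prod (Measure.pi ν)) (μ.prod (Measure.pi ν))) {f : κ → X → ℝ}
    (hf : ∀ i, Measurable (f i)) (hf0 : ∀ i x, 0 ≤ f i x) (hfi : ∀ i, Integrable (f i) μ)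
    (hg : ∀ j, Measurable (g j)) (hg0 : ∀ j y, 0 ≤ g j y) (hgi : ∀ j, Integrable (g j) (ν j))
    {p : κ → ℝ} (hp : ∀ i, 0 ≤ p i) {T : X × (∀ j, Y j) → α} (hT : Measurable T)
    {ρ : κ → α → ℝ} (hρ : ∀ i, Measurable (ρ i)) (hρ0 : ∀ i x, 0 ≤ ρ i x)
    (H : ∀ i s, MeasurableSet s → ∫ x in s, ρ i x ∂ξ =
      ∫ w, s.indicator (fun _ => (1 : ℝ)) (T w) * evolvedDensity Φ (f i) g w
        ∂μ.prod (Measure.pi ν)) :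
    HasMarginalDensity (μ.prod (Measure.pi ν)) (evolvedDensity Φ (fun x => ∑ i, p i * f i x) g) T ξ
      (fun x => ∑ i, p i * ρ i x) := by
  have hki := fun i => integrable_evolvedDensity hΦ (hfi i) hgi
  have hk0 := fun i => evolvedDensity_nonneg (Φ := Φ) (hf0 i) hg0
  rw [funext (evolvedDensity_finset_sum (Φ := Φ) (g := g) Finset.univ p f)]
  exact .finset_sum hp (fun i => .of_integral_indicator_mul_eq (hki i) (hk0 i) hT (hρ i) (hρ0 i)
    (H i)) hki (fun i => measurable_evolvedDensity (hf i) hg) hk0 hT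

variable [SigmaFinite μ]

theorem integral_evolvedDensity
    (hΦ : MeasurePreserving Φ (μ.prod (Measure.pi ν)) (μ.prod (Measure.pi ν))) :
    ∫ w, evolvedDensity Φ a g w ∂μ.prod (Measure.pi ν) = (∫ x, a x ∂μ) * ∏ j, ∫ y, g j y ∂ν j := by
  simp only [evolvedDensity]
  rw [(hΦ.symm Φ).integral_comp' fun w => a w.1 * ∏ j, g j (w.2 j),
    integral_prod_mul a fun y : ∀ j, Y j => ∏ j, g j (y j), integral_fintype_prod_eq_prod]

theorem integral_mul_log_marginals_le
    (hΦ : MeasurePreserving Φ (μ.prod (Measure.pi ν)) (μ.prod (Measure.pi ν)))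
    {a' : X → ℝ} {b : ∀ j, Y j → ℝ}
    (ha : Measurable a) (ha0 : ∀ x, 0 ≤ a x) (hai : Integrable a μ) (ha1 : ∫ x, a x ∂μ = 1)
    (hg : ∀ j, Measurable (g j)) (hg0 : ∀ j y, 0 < g j y) (hgi : ∀ j, Integrable (g j) (ν j))
    (hg1 : ∀ j, ∫ y, g j y ∂ν j = 1)
    (ha' : HasMarginalDensity (μ.prod (Measure.pi ν)) (evolvedDensity Φ a g) Prod.fst μ a')
    (hb : ∀ j, HasMarginalDensity (μ.prod (Measure.pi ν)) (evolvedDensity Φ a g) (fun w => w.2 j)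
      (ν j) (b j))
    (hal : Integrable (fun x => a x * log (a x)) μ)
    (hgl : ∀ j, Integrable (fun y => g j y * log (g j y)) (ν j))
    (hkl : Integrable (fun w => evolvedDensity Φ a g w * log (evolvedDensity Φ a g w))
      (μ.prod (Measure.pi ν)))
    (ha'l : Integrable (fun x => a' x * log (a' x)) μ)
    (hbl : ∀ j, Integrable (fun y => b j y * log (g j y)) (ν j)) :
    ∫ x, a' x * log (a' x) ∂μ + ∑ j, ∫ y, b j y * log (g j y) ∂ν j ≤
      ∫ x, a x * log (a x) ∂μ + ∑ j, ∫ y, g j y * log (g j y) ∂ν j := by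
  set k := evolvedDensity Φ a g
  set k₀ : X × (∀ j, Y j) → ℝ := fun w => a w.1 * ∏ j, g j (w.2 j)
  have hG0 : ∀ y : ∀ j, Y j, 0 < ∏ j, g j (y j) := fun y => Finset.prod_pos fun j _ => hg0 j _
  have hGm : Measurable fun y : ∀ j, Y j => ∏ j, g j (y j) := by fun_prop
  have hGi : Integrable (fun y : ∀ j, Y j => ∏ j, g j (y j)) (Measure.pi ν) :=
    Integrable.fintype_prod_dep hgi
  have hG1 : ∫ y, ∏ j, g j (y j) ∂Measure.pi ν = 1 := by
    simp [integral_fintype_prod_eq_prod, hg1]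
  have hkm : Measurable k := measurable_evolvedDensity ha hg
  have hk0 : ∀ w, 0 ≤ k w := evolvedDensity_nonneg ha0 fun j y => (hg0 j y).le
  have hk₀a : HasMarginalDensity (μ.prod (Measure.pi ν)) k₀ Prod.fst μ a :=
    hasMarginalDensity_fst_prod ha ha0 hGm (fun y => (hG0 y).le) hGi hG1
  have hk₀g : ∀ j, HasMarginalDensity (μ.prod (Measure.pi ν)) k₀ (fun w => w.2 j) (ν j) (g j) :=
    fun j => (hasMarginalDensity_pi_eval hg (fun j y => (hg0 j y).le) hgi hg1 j).prod_snd
      ha ha0 hai ha1 hGm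
  have hg0' : ∀ j y, g j y ≠ 0 := fun j y => (hg0 j y).ne'
  calc _ = ∫ w, k w * log (a' w.1 * ∏ j, g j (w.2 j)) ∂μ.prod (Measure.pi ν) :=
        (integral_mul_log_mul_prod hkm hk0 ha' hb hg hg0' ha'l hbl).symm
    _ ≤ ∫ w, k w * log (k w) ∂μ.prod (Measure.pi ν) := by
        refine integral_mul_log_le_integral_mul_log hk0
          (fun w => mul_nonneg (ha'.nonneg _) (hG0 _).le) ?_ (integrable_evolvedDensity hΦ hai hgi)
          ((ha'.integrable (integrable_evolvedDensity hΦ hai hgi)).mul_prod hGi) hkl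
          (integrable_mul_log_mul_prod hkm hk0 ha' hb hg hg0' ha'l hbl) ?_
        · filter_upwards [ha'.ae_eq_zero_of_eq_zero hkm hk0] with w hw hq
          exact hw ((mul_eq_zero.1 hq).resolve_right (hG0 _).ne')
        · rw [integral_prod_mul a' fun y : ∀ j, Y j => ∏ j, g j (y j), hG1, mul_one,
            ha'.integral_eq hkm hk0]
    _ = ∫ w, k₀ w * log (k₀ w) ∂μ.prod (Measure.pi ν) :=
        (hΦ.symm Φ).integral_comp' fun w => k₀ w * log (k₀ w)
    _ = _ := integral_mul_log_mul_prod (by fun_prop) (fun w => mul_nonneg (ha0 _) (hG0 _).le)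
        hk₀a hk₀g hg hg0' hal hgl

theorem clausius_inequality
    (hΦ : MeasurePreserving Φ (μ.prod (Measure.pi ν)) (μ.prod (Measure.pi ν)))
    {H : ∀ j, Y j → ℝ} (hH : ∀ j, Measurable (H j)) {β Z : ι → ℝ}
    (hexp : ∀ j, Integrable (fun y => exp (-β j * H j y)) (ν j))
    (hZ : ∀ j, Z j = ∫ y, exp (-β j * H j y) ∂ν j) (hZpos : ∀ j, 0 < Z j)
    {a' : X → ℝ} {b : ∀ j, Y j → ℝ}
    (ha : Measurable a) (ha0 : ∀ x, 0 ≤ a x) (hai : Integrable a μ) (ha1 : ∫ x, a x ∂μ = 1)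
    (ha' : HasMarginalDensity (μ.prod (Measure.pi ν))
      (evolvedDensity Φ a fun j => canonicalDensity (β j) (H j) (Z j)) Prod.fst μ a')
    (hb : ∀ j, HasMarginalDensity (μ.prod (Measure.pi ν))
      (evolvedDensity Φ a fun j => canonicalDensity (β j) (H j) (Z j)) (fun w => w.2 j) (ν j) (b j))
    (hal : Integrable (fun x => a x * log (a x)) μ)
    (hkl : Integrable (fun w => evolvedDensity Φ a (fun j => canonicalDensity (β j) (H j) (Z j)) w *
      log (evolvedDensity Φ a (fun j => canonicalDensity (β j) (H j) (Z j)) w))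
      (μ.prod (Measure.pi ν)))
    (ha'l : Integrable (fun x => a' x * log (a' x)) μ)
    (hHg : ∀ j, Integrable (fun y => H j y * canonicalDensity (β j) (H j) (Z j) y) (ν j))
    (hHb : ∀ j, Integrable (fun y => H j y * b j y) (ν j)) :
    ∑ j, β j * ((∫ y, H j y * canonicalDensity (β j) (H j) (Z j) y ∂ν j) -
        ∫ y, H j y * b j y ∂ν j) ≤
      ∫ x, a x * log (a x) ∂μ - ∫ x, a' x * log (a' x) ∂μ := by
  set g : ∀ j, Y j → ℝ := fun j => canonicalDensity (β j) (H j) (Z j)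
  have hgm : ∀ j, Measurable (g j) := fun j => measurable_canonicalDensity (hH j)
  have hg0 : ∀ j y, 0 < g j y := fun j => canonicalDensity_pos (hZpos j)
  have hgi : ∀ j, Integrable (g j) (ν j) := fun j => integrable_canonicalDensity (hexp j)
  have hg1 : ∀ j, ∫ y, g j y ∂ν j = 1 := fun j => integral_canonicalDensity (hZ j) (hZpos j)
  have hkm := measurable_evolvedDensity (Φ := Φ) ha hgm
  have hk0 := evolvedDensity_nonneg (Φ := Φ) ha0 fun j y => (hg0 j y).le
  have hki := integrable_evolvedDensity hΦ hai hgi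
  have hb1 : ∀ j, ∫ y, b j y ∂ν j = 1 := fun j => by
    simp [(hb j).integral_eq hkm hk0, integral_evolvedDensity hΦ, ha1, hg1]
  have hbi : ∀ j, Integrable (b j) (ν j) := fun j => (hb j).integrable hki
  have hlogi : ∀ j {c : Y j → ℝ}, Integrable c (ν j) → Integrable (fun y => H j y * c y) (ν j) →
      Integrable (fun y => c y * log (g j y)) (ν j) :=
    fun j _ => integrable_mul_log_canonicalDensity (hZpos j)
  have hlog : ∀ j {c : Y j → ℝ}, Integrable c (ν j) → Integrable (fun y => H j y * c y) (ν j) →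
      ∫ y, c y * log (g j y) ∂ν j = -log (Z j) * ∫ y, c y ∂ν j - β j * ∫ y, H j y * c y ∂ν j :=
    fun j _ => integral_mul_log_canonicalDensity (hZpos j)
  have key := integral_mul_log_marginals_le hΦ ha ha0 hai ha1 hgm hg0 hgi hg1 ha' hb hal
    (fun j => hlogi j (hgi j) (hHg j)) hkl ha'l (fun j => hlogi j (hbi j) (hHb j))
  simp only [fun j => hlog j (hgi j) (hHg j), fun j => hlog j (hbi j) (hHb j), hg1, hb1] at key
  simp only [mul_sub, Finset.sum_sub_distrib] at key ⊢
  linarith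

end Evolution

theorem mul_log_div_eq_sub {x y : ℝ} (h : x ≠ 0 → y ≠ 0) :
    x * log (x / y) = x * log x - x * log y := by
  rcases eq_or_ne x 0 with rfl | hx
  · simp
  rw [log_div hx (h hx), mul_sub]

theorem integral_mixture_mul_log {X ι : Type*} [MeasurableSpace X] {μ : Measure X} [Fintype ι]
    {p : ι → ℝ} (hp : ∀ i, 0 < p i) {f : ι → X → ℝ} (hf0 : ∀ i x, 0 ≤ f i x)
    (hfl : ∀ i, Integrable (fun x => f i x * log (f i x)) μ)
    (hfc : ∀ i, Integrable (fun x => f i x * log (∑ l, p l * f l x)) μ) :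
    ∫ x, (∑ i, p i * f i x) * log (∑ i, p i * f i x) ∂μ =
      ∑ i, p i * ∫ x, f i x * log (f i x) ∂μ -
        ∑ i, p i * ∫ x, f i x * log (f i x / ∑ l, p l * f l x) ∂μ := by
  have hmix : ∀ i x, f i x ≠ 0 → ∑ l, p l * f l x ≠ 0 := fun i x hx =>
    ((mul_pos (hp i) ((hf0 i x).lt_of_ne' hx)).trans_le
      (Finset.single_le_sum (fun l _ => mul_nonneg (hp l).le (hf0 l x)) (Finset.mem_univ i))).ne'
  have hdiv : ∀ i, ∫ x, f i x * log (f i x / ∑ l, p l * f l x) ∂μ =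
      ∫ x, f i x * log (f i x) ∂μ - ∫ x, f i x * log (∑ l, p l * f l x) ∂μ := fun i => by
    rw [← integral_sub (hfl i) (hfc i)]
    exact integral_congr_ae (ae_of_all _ fun x => mul_log_div_eq_sub (hmix i x))
  simp only [hdiv, mul_sub, Finset.sum_sub_distrib, sub_sub_cancel, ← integral_const_mul]
  rw [← integral_finsetSum _ fun i _ => (hfc i).const_mul _]
  simp only [Finset.sum_mul, mul_assoc]

theorem landauer_bound_measure_theoretic_general
    {X : Type*} [MeasurableSpace X] (μ : Measure X) [SigmaFinite μ]
    (m : ℕ) {Y : Fin m → Type*} [∀ j, MeasurableSpace (Y j)]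
    (ν : ∀ j, Measure (Y j)) [∀ j, SigmaFinite (ν j)]
    (H : ∀ j, Y j → ℝ) (hH : ∀ j, Measurable (H j))
    (β : Fin m → ℝ)
    (hexp : ∀ j, Integrable (fun y => Real.exp (-β j * H j y)) (ν j))
    (Z : Fin m → ℝ) (hZ : ∀ j, Z j = ∫ y, Real.exp (-β j * H j y) ∂(ν j))
    (hZpos : ∀ j, 0 < Z j)
    (g : ∀ j, Y j → ℝ) (hg : ∀ j, g j = fun y => (Z j)⁻¹ * Real.exp (-β j * H j y))
    -- a single, fixed Hamiltonian evolution of the composite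
    (Φ : (X × (∀ j, Y j)) ≃ᵐ (X × (∀ j, Y j)))
    (hΦ : MeasurePreserving Φ (μ.prod (Measure.pi ν)) (μ.prod (Measure.pi ν)))
    -- the input densities of the system
    (n : ℕ) (f : Fin n → X → ℝ)
    (hfm : ∀ i, Measurable (f i)) (hf0 : ∀ i x, 0 ≤ f i x)
    (hfi : ∀ i, Integrable (f i) μ) (hf1 : ∀ i, (∫ x, f i x ∂μ) = 1)
    -- the evolved joint densities (reservoirs initially canonical and uncorrelated)
    (f₁ : Fin n → X × (∀ j, Y j) → ℝ)
    (hf₁ : ∀ i, f₁ i = fun w => f i (Φ.symm w).1 * ∏ j, g j ((Φ.symm w).2 j))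
    -- each input is taken to one and the same final system marginal `fb`
    (fb : X → ℝ) (hfbm : Measurable fb) (hfb0 : ∀ x, 0 ≤ fb x)
    (hfbmarg : ∀ i, ∀ s : Set X, MeasurableSet s →
      (∫ x in s, fb x ∂μ) =
        ∫ w, s.indicator (fun _ => (1 : ℝ)) w.1 * f₁ i w ∂(μ.prod (Measure.pi ν)))
    -- final reservoir marginals, for each input `i` and each reservoir `j`
    (g' : Fin n → ∀ j, Y j → ℝ)
    (hg'm : ∀ i j, Measurable (g' i j)) (hg'0 : ∀ i j y, 0 ≤ g' i j y)
    (hg'marg : ∀ i j, ∀ s : Set (Y j), MeasurableSet s →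
      (∫ y in s, g' i j y ∂(ν j)) =
        ∫ w, s.indicator (fun _ => (1 : ℝ)) (w.2 j) * f₁ i w ∂(μ.prod (Measure.pi ν)))
    -- the weights and the mixture
    (p : Fin n → ℝ) (hp : ∀ i, 0 < p i) (hps : ∑ i, p i = 1)
    (fbar : X → ℝ) (hfbar : fbar = fun x => ∑ i, p i * f i x)
    -- finiteness of the entropy integrals
    (hSf : ∀ i, Integrable (fun x => f i x * Real.log (f i x)) μ)
    (hSfb : Integrable (fun x => fb x * Real.log (fb x)) μ)
    (hSbar : Integrable (fun x => fbar x * Real.log (fbar x)) μ)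
    (hSmix : Integrable
      (fun w => (∑ i, p i * f₁ i w) * Real.log (∑ i, p i * f₁ i w))
      (μ.prod (Measure.pi ν)))
    -- finiteness of the relative-entropy integrals
    (hcross : ∀ i, Integrable (fun x => f i x * Real.log (fbar x)) μ)
    -- finiteness of the energy integrals
    (hEg : ∀ j, Integrable (fun y => H j y * g j y) (ν j))
    (hEg' : ∀ i j, Integrable (fun y => H j y * g' i j y) (ν j))
    -- expected heat gained from reservoir `j` when the input density is `f i`
    (Q : Fin n → Fin m → ℝ)
    (hQ : ∀ i j, Q i j = (∫ y, H j y * g j y ∂(ν j)) - ∫ y, H j y * g' i j y ∂(ν j)) :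
    ∑ i, p i * ∑ j, β j * Q i j ≤
      (∑ i, p i * ((-∫ x, fb x * Real.log (fb x) ∂μ) -
        (-∫ x, f i x * Real.log (f i x) ∂μ))) -
      ∑ i, p i * ∫ x, f i x * Real.log (f i x / fbar x) ∂μ := by
  obtain rfl : g = fun j => canonicalDensity (β j) (H j) (Z j) := funext hg
  set g : ∀ j, Y j → ℝ := fun j => canonicalDensity (β j) (H j) (Z j)
  obtain rfl : f₁ = fun i => evolvedDensity Φ (f i) g := funext hf₁
  subst hfbar
  have hgm : ∀ j, Measurable (g j) := fun j => measurable_canonicalDensity (hH j)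
  have hg0 : ∀ j y, 0 ≤ g j y := fun j y => (canonicalDensity_pos (hZpos j) y).le
  have hgi : ∀ j, Integrable (g j) (ν j) := fun j => integrable_canonicalDensity (hexp j)
  have hX := hasMarginalDensity_evolvedDensity_finset_sum hΦ hfm hf0 hfi hgm hg0 hgi
    (fun i => (hp i).le) measurable_fst (fun _ => hfbm) (fun _ => hfb0) hfbmarg
  have hY := fun j => hasMarginalDensity_evolvedDensity_finset_sum hΦ hfm hf0 hfi hgm hg0 hgi
    (fun i => (hp i).le) (by fun_prop) (hg'm · j) (hg'0 · j) (hg'marg · j)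
  simp only [← Finset.sum_mul, hps, one_mul] at hX
  simp only [← evolvedDensity_finset_sum] at hSmix
  have hHg' : ∀ j, (fun y => H j y * ∑ i, p i * g' i j y) =
      fun y => ∑ i, p i * (H j y * g' i j y) :=
    fun j => funext fun y => by simp only [Finset.mul_sum, mul_left_comm]
  have key := clausius_inequality hΦ hH hexp hZ hZpos
    (Finset.measurable_sum _ fun i _ => (hfm i).const_mul _)
    (fun x => Finset.sum_nonneg fun i _ => mul_nonneg (hp i).le (hf0 i x))
    (integrable_finsetSum _ fun i _ => (hfi i).const_mul _)
    (by simp [integral_finsetSum _ fun i _ => (hfi i).const_mul _, integral_const_mul, hf1, hps])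
    hX hY hSbar hSmix hSfb hEg
    (fun j => hHg' j ▸ integrable_finsetSum _ fun i _ => (hEg' i j).const_mul _)
  simp only [hHg', integral_finsetSum _ fun i _ => (hEg' _ _).const_mul _, integral_const_mul,
    integral_mixture_mul_log hp hf0 hSf hcross] at key
  have hheat : ∑ i, p i * ∑ j, β j * Q i j =
      ∑ j, β j * ((∫ y, H j y * g j y ∂ν j) - ∑ i, p i * ∫ y, H j y * g' i j y ∂ν j) := by
    simp only [hQ, Finset.mul_sum]
    rw [Finset.sum_comm]
    refine Finset.sum_congr rfl fun j _ => ?_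
    simp only [mul_sub, Finset.mul_sum, Finset.sum_sub_distrib, ← Finset.sum_mul, hps, one_mul]
    simp only [mul_left_comm]
  rw [hheat]
  simp only [mul_sub, mul_neg, Finset.sum_sub_distrib, Finset.sum_neg_distrib, ← Finset.sum_mul,
    hps] at key ⊢
  linarith

/-- Landauer bound, measure-theoretic core: a fixed measure-preserving evolution `Φ` of
system plus canonical reservoirs takes each input system density `f i` to a final joint
density with one and the same system marginal `f_b`. With `Q i j` the expected heat
gained from reservoir `j` on input `i`, positive weights `p` summing to `1`, and
`f̄ = ∑ p i • f i`, one has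
`∑ i, p i * ∑ j, β j * Q i j ≤ ∑ i, p i * (S[f_b] - S[f i]) - ∑ i, p i * S[f i ‖ f̄]`,
where `S[f] = -∫ f log f` and `S[f ‖ g] = ∫ f log (f/g)`. -/
theorem landauer_bound_measure_theoretic
    {X : Type*} [MeasurableSpace X] (μ : Measure X) [SigmaFinite μ]
    (m : ℕ) {Y : Fin m → Type*} [∀ j, MeasurableSpace (Y j)]
    (ν : ∀ j, Measure (Y j)) [∀ j, SigmaFinite (ν j)]
    (H : ∀ j, Y j → ℝ) (hH : ∀ j, Measurable (H j))
    (β : Fin m → ℝ) (hβ : ∀ j, 0 < β j)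
    (hexp : ∀ j, Integrable (fun y => Real.exp (-β j * H j y)) (ν j))
    (Z : Fin m → ℝ) (hZ : ∀ j, Z j = ∫ y, Real.exp (-β j * H j y) ∂(ν j))
    (hZpos : ∀ j, 0 < Z j)
    (g : ∀ j, Y j → ℝ) (hg : ∀ j, g j = fun y => (Z j)⁻¹ * Real.exp (-β j * H j y))
    -- a single, fixed Hamiltonian evolution of the composite
    (Φ : (X × (∀ j, Y j)) ≃ᵐ (X × (∀ j, Y j)))
    (hΦ : MeasurePreserving Φ (μ.prod (Measure.pi ν)) (μ.prod (Measure.pi ν)))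
    -- the input densities of the system
    (n : ℕ) (f : Fin n → X → ℝ)
    (hfm : ∀ i, Measurable (f i)) (hf0 : ∀ i x, 0 ≤ f i x)
    (hfi : ∀ i, Integrable (f i) μ) (hf1 : ∀ i, (∫ x, f i x ∂μ) = 1)
    -- the evolved joint densities (reservoirs initially canonical and uncorrelated)
    (f₁ : Fin n → X × (∀ j, Y j) → ℝ)
    (hf₁ : ∀ i, f₁ i = fun w => f i (Φ.symm w).1 * ∏ j, g j ((Φ.symm w).2 j))
    -- each input is taken to one and the same final system marginal `fb`
    (fb : X → ℝ) (hfbm : Measurable fb) (hfb0 : ∀ x, 0 ≤ fb x)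
    (hfbmarg : ∀ i, ∀ s : Set X, MeasurableSet s →
      (∫ x in s, fb x ∂μ) =
        ∫ w, s.indicator (fun _ => (1 : ℝ)) w.1 * f₁ i w ∂(μ.prod (Measure.pi ν)))
    -- final reservoir marginals, for each input `i` and each reservoir `j`
    (g' : Fin n → ∀ j, Y j → ℝ)
    (hg'm : ∀ i j, Measurable (g' i j)) (hg'0 : ∀ i j y, 0 ≤ g' i j y)
    (hg'marg : ∀ i j, ∀ s : Set (Y j), MeasurableSet s →
      (∫ y in s, g' i j y ∂(ν j)) =
        ∫ w, s.indicator (fun _ => (1 : ℝ)) (w.2 j) * f₁ i w ∂(μ.prod (Measure.pi ν)))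
    -- the weights and the mixture
    (p : Fin n → ℝ) (hp : ∀ i, 0 < p i) (hps : ∑ i, p i = 1)
    (fbar : X → ℝ) (hfbar : fbar = fun x => ∑ i, p i * f i x)
    -- finiteness of the entropy integrals
    (hSf : ∀ i, Integrable (fun x => f i x * Real.log (f i x)) μ)
    (hSfb : Integrable (fun x => fb x * Real.log (fb x)) μ)
    (hSbar : Integrable (fun x => fbar x * Real.log (fbar x)) μ)
    (hSg : ∀ j, Integrable (fun y => g j y * Real.log (g j y)) (ν j))
    (hSg' : ∀ i j, Integrable (fun y => g' i j y * Real.log (g' i j y)) (ν j))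
    (hSf₁ : ∀ i, Integrable (fun w => f₁ i w * Real.log (f₁ i w)) (μ.prod (Measure.pi ν)))
    (hSmix : Integrable
      (fun w => (∑ i, p i * f₁ i w) * Real.log (∑ i, p i * f₁ i w))
      (μ.prod (Measure.pi ν)))
    (hSg'mix : ∀ j, Integrable
      (fun y => (∑ i, p i * g' i j y) * Real.log (∑ i, p i * g' i j y)) (ν j))
    -- finiteness of the relative-entropy integrals
    (hrel : ∀ i, Integrable (fun x => f i x * Real.log (f i x / fbar x)) μ)
    (hcross : ∀ i, Integrable (fun x => f i x * Real.log (fbar x)) μ)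
    -- finiteness of the energy integrals
    (hEg : ∀ j, Integrable (fun y => H j y * g j y) (ν j))
    (hEg' : ∀ i j, Integrable (fun y => H j y * g' i j y) (ν j))
    -- expected heat gained from reservoir `j` when the input density is `f i`
    (Q : Fin n → Fin m → ℝ)
    (hQ : ∀ i j, Q i j = (∫ y, H j y * g j y ∂(ν j)) - ∫ y, H j y * g' i j y ∂(ν j)) :
    ∑ i, p i * ∑ j, β j * Q i j ≤
      (∑ i, p i * ((-∫ x, fb x * Real.log (fb x) ∂μ) -
        (-∫ x, f i x * Real.log (f i x) ∂μ))) -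
      ∑ i, p i * ∫ x, f i x * Real.log (f i x / fbar x) ∂μ :=
  landauer_bound_measure_theoretic_general μ m ν H hH β hexp Z hZ hZpos g hg Φ hΦ n f hfm hf0 hfi
    hf1 f₁ hf₁ fb hfbm hfb0 hfbmarg g' hg'm hg'0 hg'marg p hp hps fbar hfbar hSf hSfb hSbar hSmix
    hcross hEg hEg' Q hQ
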